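/- Let κ be an infinite set, D an ultrafilter on κ, and B_i (i ∈ κ) Boolean algebras. If |∏_{i∈κ} Length(B_i)/D| > Length(∏_{i∈κ} B_i/D), then {i ∈ κ : Length⁺(B_i) is a limit cardinal} ∈ D, {i ∈ κ : Length⁺(B_i) is a regular cardinal} ∈ D, and hence {i ∈ κ : Length⁺(B_i) is weakly inaccessible} ∈ D. -/

import Mathlib

open Cardinal Filter

universe u

namespace ShSi641

variable {ι : Type u}

/-- The set-theoretic ultraproduct `∏_{i} B i / D`. -/
def UProd (D : Ultrafilter ι) (B : ι → Type u) : Type u :=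
  Quotient ((D : Filter ι).productSetoid B)

namespace UProd

variable {D : Ultrafilter ι} {B : ι → Type u}

/-- The equivalence class `f/D` of `f ∈ ∏_i B i`. -/
def mk (D : Ultrafilter ι) (f : ∀ i, B i) : UProd D B :=
  Quotient.mk ((D : Filter ι).productSetoid B) f

@[elab_as_elim]
theorem ind {motive : UProd D B → Prop} (h : ∀ f : ∀ i, B i, motive (mk D f)) :
    ∀ x : UProd D B, motive x :=
  Quotient.ind h

/-- Lift of a family of binary relations to the ultraproduct. -/
def uRel (D : Ultrafilter ι) {B : ι → Type u} (r : ∀ i, B i → B i → Prop) :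
    UProd D B → UProd D B → Prop :=
  Quotient.lift₂ (fun f g => ∀ᶠ i in (D : Filter ι), r i (f i) (g i))
    (fun _ _ _ _ hf hg => propext <| eventually_congr <|
      (hf.and hg).mono fun _ ⟨hf', hg'⟩ => by rw [hf', hg'])

theorem uRel_mk {r : ∀ i, B i → B i → Prop} {f g : ∀ i, B i} :
    uRel D r (mk D f) (mk D g) ↔ ∀ᶠ i in (D : Filter ι), r i (f i) (g i) :=
  Iff.rfl

section BA

variable [∀ i, BooleanAlgebra (B i)]

/-- Pointwise binary operations descend to the ultraproduct. -/
def map₂ (op : ∀ i, B i → B i → B i) : UProd D B → UProd D B → UProd D B :=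
  Quotient.map₂ (fun f g i => op i (f i) (g i))
    (fun _ _ hf _ _ hg => (hf.and hg).mono fun _ ⟨hf', hg'⟩ => by
      dsimp only; rw [hf', hg'])

def map₁ (op : ∀ i, B i → B i) : UProd D B → UProd D B :=
  Quotient.map (fun f i => op i (f i))
    (fun _ _ hf => hf.mono fun _ hf' => by dsimp only; rw [hf'])

instance instPartialOrder : PartialOrder (UProd D B) where
  le := uRel D fun _ x y => x ≤ y
  le_refl x := ind (fun f => Eventually.of_forall fun i => le_refl (f i)) x
  le_trans x y z := Quotient.inductionOn₃ x y z fun _ _ _ h1 h2 =>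
    (h1.and h2).mono fun _ ⟨a, b⟩ => a.trans b
  le_antisymm x y := Quotient.inductionOn₂ x y fun _ _ h1 h2 =>
    Quotient.sound <| (h1.and h2).mono fun _ ⟨a, b⟩ => le_antisymm a b

instance instBooleanAlgebra : BooleanAlgebra (UProd D B) where
  sup := map₂ fun _ x y => x ⊔ y
  inf := map₂ fun _ x y => x ⊓ y
  compl := map₁ fun _ x => xᶜ
  sdiff := map₂ fun _ x y => x \ y
  himp := map₂ fun _ x y => x ⇨ y
  top := mk D fun _ => ⊤
  bot := mk D fun _ => ⊥
  le_sup_left x y := Quotient.inductionOn₂ x y fun _ _ =>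
    Eventually.of_forall fun _ => le_sup_left
  le_sup_right x y := Quotient.inductionOn₂ x y fun _ _ =>
    Eventually.of_forall fun _ => le_sup_right
  sup_le x y z := Quotient.inductionOn₃ x y z fun _ _ _ h1 h2 =>
    (h1.and h2).mono fun _ ⟨a, b⟩ => sup_le a b
  inf_le_left x y := Quotient.inductionOn₂ x y fun _ _ =>
    Eventually.of_forall fun _ => inf_le_left
  inf_le_right x y := Quotient.inductionOn₂ x y fun _ _ =>
    Eventually.of_forall fun _ => inf_le_right
  le_inf x y z := Quotient.inductionOn₃ x y z fun _ _ _ h1 h2 =>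
    (h1.and h2).mono fun _ ⟨a, b⟩ => le_inf a b
  le_sup_inf x y z := Quotient.inductionOn₃ x y z fun _ _ _ =>
    Eventually.of_forall fun _ => le_sup_inf
  inf_compl_le_bot x := ind (fun _ => Eventually.of_forall fun _ => inf_compl_eq_bot.le) x
  top_le_sup_compl x := ind (fun _ => Eventually.of_forall fun _ => sup_compl_eq_top.ge) x
  le_top x := ind (fun _ => Eventually.of_forall fun _ => le_top) x
  bot_le x := ind (fun _ => Eventually.of_forall fun _ => bot_le) x
  sdiff_eq x y := Quotient.inductionOn₂ x y fun _ _ =>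
    Quotient.sound <| Eventually.of_forall fun _ => sdiff_eq
  himp_eq x y := Quotient.inductionOn₂ x y fun _ _ =>
    Quotient.sound <| Eventually.of_forall fun _ => himp_eq

end BA

end UProd

/-- `Length(B)`: the sup of cardinalities of subsets of `B` linearly ordered
by the Boolean partial order. -/
noncomputable def baLength (B : Type u) [BooleanAlgebra B] : Cardinal.{u} :=
  ⨆ X : {X : Set B // IsChain (· ≤ ·) X}, #X.1

/-- `Length⁺(B)`: the sup of the cardinal successors of cardinalities of subsets of `B`
linearly ordered by the Boolean partial order. -/
noncomputable def baLengthPlus (B : Type u) [BooleanAlgebra B] : Cardinal.{u} :=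
  ⨆ X : {X : Set B // IsChain (· ≤ ·) X}, Order.succ #X.1


/-- A cardinal is weakly inaccessible if it is an uncountable regular limit cardinal. -/
def IsWeaklyInaccessible (c : Cardinal.{u}) : Prop :=
  Cardinal.aleph0 < c ∧ c.IsRegular ∧ Order.IsSuccLimit c

/-- A (strict) order is `λ`-like if its carrier has cardinality `λ` while every
proper initial segment has cardinality `< λ`. -/
def IsLambdaLike {α : Type u} (r : α → α → Prop) (lam : Cardinal.{u}) : Prop :=
  #α = lam ∧ ∀ x : α, #{y : α // r y x} < lam

/-- An antichain of a Boolean algebra: a set of pairwise disjoint nonzero elements. -/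
def IsBAAntichain {B : Type u} [BooleanAlgebra B] (X : Set B) : Prop :=
  (∀ x ∈ X, x ≠ ⊥) ∧ X.Pairwise fun x y => x ⊓ y = ⊥

/-- The cellularity `c(B)` of a Boolean algebra. -/
noncomputable def baCellularity (B : Type u) [BooleanAlgebra B] : Cardinal.{u} :=
  ⨆ X : {X : Set B // IsBAAntichain X}, #X.1

/-- `c⁺(B)`, the sup of successors of cardinalities of antichains. -/
noncomputable def baCellularityPlus (B : Type u) [BooleanAlgebra B] : Cardinal.{u} :=
  ⨆ X : {X : Set B // IsBAAntichain X}, Order.succ #X.1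

/-- A subset of a Boolean algebra which is well-ordered by the Boolean order. -/
def IsWellOrderedChain {B : Type u} [BooleanAlgebra B] (X : Set B) : Prop :=
  IsChain (· ≤ ·) X ∧ X.WellFoundedOn (· < ·)

/-- The depth of a Boolean algebra. -/
noncomputable def baDepth (B : Type u) [BooleanAlgebra B] : Cardinal.{u} :=
  ⨆ X : {X : Set B // IsWellOrderedChain X}, #X.1

/-- `Depth⁺(B)`. -/
noncomputable def baDepthPlus (B : Type u) [BooleanAlgebra B] : Cardinal.{u} :=
  ⨆ X : {X : Set B // IsWellOrderedChain X}, Order.succ #X.1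

/-- The set `S` is a subalgebra of the Boolean algebra `B` (as a set). -/
def IsSubalgebraSet {B : Type u} [BooleanAlgebra B] (S : Set B) : Prop :=
  ⊥ ∈ S ∧ ⊤ ∈ S ∧ (∀ x ∈ S, xᶜ ∈ S) ∧ (∀ x ∈ S, ∀ y ∈ S, x ⊔ y ∈ S) ∧
    ∀ x ∈ S, ∀ y ∈ S, x ⊓ y ∈ S

/-- `C` is a closed unbounded subset of the ordinal `l`. -/
def ClubIn (C : Set Ordinal.{u}) (l : Ordinal.{u}) : Prop :=
  C ⊆ Set.Iio l ∧ (∀ α < l, ∃ β ∈ C, α ≤ β) ∧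
    ∀ δ < l, δ ≠ 0 → (∀ α < δ, ∃ β ∈ C, α ≤ β ∧ β < δ) → δ ∈ C

/-- `S` is a stationary subset of the ordinal `l`: it meets every club of `l`. -/
def StationaryIn (S : Set Ordinal.{u}) (l : Ordinal.{u}) : Prop :=
  ∀ C, ClubIn C l → (S ∩ C).Nonempty

/-!
Write `λᵢ = Length(Bᵢ)` and `L = Length(∏ Bᵢ/D)`. An ultraproduct of chains is a chain, so if
`D`-almost every `Bᵢ` has a chain of size `λᵢ` (which is the case when `Length⁺(Bᵢ)` is a successor,
namely `λᵢ⁺`) then `|∏ λᵢ/D| ≤ L`. If instead `D`-almost every `λᵢ = Length⁺(Bᵢ)` is a singular limit,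
split `λᵢ` into `cf(λᵢ)` pieces of size `< λᵢ`, each of which embeds into a chain of `Bᵢ`. The
ultraproduct of the pieces maps `∏ λᵢ/D` to `∏ cf(λᵢ)/D` with fibres embedded into chains of
`∏ Bᵢ/D`, while `∏ cf(λᵢ)/D` itself embeds into a chain because `cf(λᵢ) < λᵢ`; hence
`|∏ λᵢ/D| ≤ L · L = L`. Finally `Length⁺` of a Boolean algebra is never `ℵ₀`, since an infinite
Boolean algebra has an infinite chain.
-/

open Set Function Order

section Chains

variable {B : Type u} [BooleanAlgebra B]

instance : Nonempty {X : Set B // IsChain (· ≤ ·) X} := ⟨⟨∅, IsChain.empty⟩⟩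

lemma bddAbove_range_mk_chain :
    BddAbove (range fun X : {X : Set B // IsChain (· ≤ ·) X} => #X.1) :=
  ⟨#B, by rintro _ ⟨X, rfl⟩; exact mk_set_le X.1⟩

lemma bddAbove_range_succ_mk_chain :
    BddAbove (range fun X : {X : Set B // IsChain (· ≤ ·) X} => succ #X.1) :=
  ⟨succ #B, by rintro _ ⟨X, rfl⟩; exact succ_le_succ (mk_set_le X.1)⟩

lemma mk_le_baLength {X : Set B} (hX : IsChain (· ≤ ·) X) : #X ≤ baLength B :=
  le_ciSup bddAbove_range_mk_chain ⟨X, hX⟩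

lemma succ_mk_le_baLengthPlus {X : Set B} (hX : IsChain (· ≤ ·) X) :
    succ #X ≤ baLengthPlus B :=
  le_ciSup bddAbove_range_succ_mk_chain ⟨X, hX⟩

lemma exists_isChain_lt_mk {c : Cardinal.{u}} (hc : c < baLength B) :
    ∃ X : Set B, IsChain (· ≤ ·) X ∧ c < #X :=
  let ⟨X, hX⟩ := exists_lt_of_lt_ciSup hc
  ⟨X.1, X.2, hX⟩

lemma baLength_ne_zero : baLength B ≠ 0 := by
  have h := mk_le_baLength (IsChain.singleton (r := (· ≤ ·)) (a := (⊥ : B)))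
  rw [mk_singleton] at h
  exact (zero_lt_one.trans_le h).ne'

lemma baLength_le_baLengthPlus : baLength B ≤ baLengthPlus B :=
  ciSup_mono bddAbove_range_succ_mk_chain fun _ => le_succ _

lemma baLengthPlus_le_succ_baLength : baLengthPlus B ≤ succ (baLength B) :=
  ciSup_le fun X => succ_le_succ (mk_le_baLength X.2)

lemma isSuccLimit_baLengthPlus_of_eq (h : baLength B = baLengthPlus B) :
    IsSuccLimit (baLengthPlus B) := by
  refine ⟨not_isMin_of_lt (lt_of_lt_of_le (lt_succ 0) ?_), isSuccPrelimit_of_succ_lt fun c hc => ?_⟩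
  · simpa using succ_mk_le_baLengthPlus (IsChain.empty (r := (· ≤ ·)) (α := B))
  · obtain ⟨X, hX, hcX⟩ := exists_isChain_lt_mk (h ▸ hc)
    exact (succ_le_of_lt hcX).trans_lt ((lt_succ _).trans_le (succ_mk_le_baLengthPlus hX))

lemma exists_isChain_mk_eq_baLength (h : ¬IsSuccLimit (baLengthPlus B)) :
    ∃ X : Set B, IsChain (· ≤ ·) X ∧ #X = baLength B := by
  have hlt : baLength B < baLengthPlus B :=
    baLength_le_baLengthPlus.lt_of_ne fun heq => h (isSuccLimit_baLengthPlus_of_eq heq)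
  obtain ⟨X, hX⟩ := exists_lt_of_lt_ciSup hlt
  exact ⟨X.1, X.2, le_antisymm (mk_le_baLength X.2) (lt_succ_iff.mp hX)⟩

lemma baLength_eq_baLengthPlus (h : IsSuccLimit (baLengthPlus B)) :
    baLength B = baLengthPlus B :=
  baLength_le_baLengthPlus.antisymm <| not_lt.mp fun hlt =>
    (h.succ_lt hlt).not_ge baLengthPlus_le_succ_baLength

lemma exists_lt_infinite_Iic {x : B} (hx : (Iic x).Infinite) : ∃ y < x, (Iic y).Infinite := by
  obtain ⟨w, hwx, hw⟩ := (hx.sdiff (toFinite {⊥, x})).nonempty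
  simp only [mem_insert_iff, mem_singleton_iff, not_or] at hw
  -- `Iic x` embeds into `Iic w ×ˢ Iic (x \ w)`, so one of the factors is infinite.
  by_cases hw_inf : (Iic w).Infinite
  · exact ⟨w, lt_of_le_of_ne hwx hw.2, hw_inf⟩
  refine ⟨x \ w, lt_of_le_of_ne sdiff_le fun h => hw.1 ?_, fun hfin => hx ?_⟩
  · exact (sdiff_eq_self_iff_disjoint.mp h).eq_bot_of_le hwx
  have hinj : InjOn (fun y => (y ⊓ w, y \ w)) (Iic x) := fun y _ z _ h => by
    simp only [Prod.mk.injEq] at h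
    rw [← sup_inf_sdiff y w, ← sup_inf_sdiff z w, h.1, h.2]
  refine (((not_infinite.mp hw_inf).prod hfin).subset ?_).of_finite_image hinj
  rintro _ ⟨y, hy, rfl⟩
  exact ⟨inf_le_right, sdiff_le_sdiff_right hy⟩

lemma exists_isChain_infinite [Infinite B] : ∃ X : Set B, IsChain (· ≤ ·) X ∧ X.Infinite := by
  have step : ∀ x : {x : B // (Iic x).Infinite}, ∃ y : {x : B // (Iic x).Infinite}, y.1 < x.1 :=
    fun x => let ⟨y, hy, hinf⟩ := exists_lt_infinite_Iic x.2; ⟨⟨y, hinf⟩, hy⟩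
  choose next hnext using step
  let start : {x : B // (Iic x).Infinite} := ⟨⊤, by simpa using infinite_univ⟩
  have hanti : StrictAnti fun n => (next^[n] start).1 := strictAnti_nat_of_succ_lt fun n => by
    rw [iterate_succ_apply']
    exact hnext _
  exact ⟨_, hanti.antitone.isChain_range, infinite_range_of_injective hanti.injective⟩

lemma aleph0_lt_baLengthPlus (h : IsSuccLimit (baLengthPlus B)) : ℵ₀ < baLengthPlus B := by
  have : Infinite B := by
    refine infinite_iff.mpr (aleph0_le.mpr fun n => ?_)
    have hn : (n : Cardinal) < baLength B := natCast_lt_aleph0.trans_le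
      ((aleph0_le_of_isSuccLimit h).trans_eq (baLength_eq_baLengthPlus h).symm)
    obtain ⟨X, -, hX⟩ := exists_isChain_lt_mk hn
    exact hX.le.trans (mk_set_le X)
  obtain ⟨X, hX, hinf⟩ := exists_isChain_infinite (B := B)
  exact (lt_succ_iff.mpr (aleph0_le_mk_iff.mpr hinf.to_subtype)).trans_le
    (succ_mk_le_baLengthPlus hX)

lemma exists_injective_total_of_mk_le {α : Type u} {X : Set B} (hX : IsChain (· ≤ ·) X)
    (h : #α ≤ #X) : ∃ e : α → B, Injective e ∧ ∀ a b, e a ≤ e b ∨ e b ≤ e a := by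
  obtain ⟨f⟩ := h
  exact ⟨fun a => f a, Subtype.val_injective.comp f.injective,
    fun a b => hX.total (f a).2 (f b).2⟩

lemma exists_fiberwise_injective_total {α J : Type u} (φ : α → J)
    (h : ∀ j, #(φ ⁻¹' {j}) < baLength B) :
    ∃ ψ : α → B, ∀ a b, φ a = φ b → (ψ a = ψ b → a = b) ∧ (ψ a ≤ ψ b ∨ ψ b ≤ ψ a) := by
  have : ∀ j, ∃ e : φ ⁻¹' {j} → B, Injective e ∧ ∀ a b, e a ≤ e b ∨ e b ≤ e a := fun j =>
    let ⟨_, hX, hlt⟩ := exists_isChain_lt_mk (h j)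
    exists_injective_total_of_mk_le hX hlt.le
  choose e he using this
  have he_apply : ∀ a j (ha : φ a = j), e (φ a) ⟨a, rfl⟩ = e j ⟨a, ha⟩ := by
    rintro a _ rfl
    rfl
  refine ⟨fun a => e (φ a) ⟨a, rfl⟩, fun a b hab => ?_⟩
  simp only [he_apply a (φ b) hab]
  exact ⟨fun h => congrArg Subtype.val ((he _).1 h), (he _).2 _ _⟩

end Chains

lemma exists_cof_out_mk_preimage_lt {κ : Cardinal.{u}} (hκ : ℵ₀ ≤ κ) :
    ∃ φ : κ.out → κ.ord.cof.out, ∀ j, #(φ ⁻¹' {j}) < κ := by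
  obtain ⟨S, hS, hSc⟩ := Order.exists_cof_eq κ.ord.ToType
  rw [← Ordinal.cof_type, Ordinal.type_toType] at hSc
  obtain ⟨e₁⟩ : Nonempty (κ.out ≃ κ.ord.ToType) := Cardinal.eq.mp (by simp)
  obtain ⟨e₂⟩ : Nonempty (S ≃ κ.ord.cof.out) := Cardinal.eq.mp (by rw [hSc, mk_out])
  choose s hsS hle using hS
  refine ⟨fun a => e₂ ⟨s (e₁ a), hsS _⟩, fun j => ?_⟩
  set b : κ.ord.ToType := (e₂.symm j).1
  have hsub : (fun a => e₂ ⟨s (e₁ a), hsS _⟩) ⁻¹' {j} ⊆ e₁ ⁻¹' Iic b := by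
    intro a ha
    simp only [mem_preimage, mem_singleton_iff] at ha
    simp only [b, mem_preimage, mem_Iic, ← ha, Equiv.symm_apply_apply]
    exact hle _
  calc _ ≤ #(e₁ ⁻¹' Iic b) := mk_le_mk_of_subset hsub
    _ = #(insert b (Iio b) : Set κ.ord.ToType) := by rw [mk_preimage_equiv, Iio_insert]
    _ ≤ #(Iio b) + 1 := mk_insert_le
    _ < κ := add_lt_of_lt hκ (by simpa using mk_Iio_lt b) (one_lt_aleph0.trans_le hκ)

namespace UProd

variable {ι : Type u} {D : Ultrafilter ι} {A C : ι → Type u}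

def map (e : ∀ i, A i → C i) : UProd D A → UProd D C :=
  Quotient.map (fun f i => e i (f i)) fun _ _ h => h.mono fun i hi => congrArg (e i) hi

lemma mk_surjective : Surjective (mk D : (∀ i, A i) → UProd D A) :=
  Quotient.mk_surjective

lemma mk_eq_mk {f g : ∀ i, A i} : mk D f = mk D g ↔ ∀ᶠ i in (D : Filter ι), f i = g i :=
  Quotient.eq

lemma mk_le_mk_uProd_const (α : Type u) : #α ≤ #(UProd D fun _ => α) :=
  mk_le_of_injective (f := fun a => mk D fun _ => a) fun _ _ hab =>
    let ⟨_, h⟩ := (mk_eq_mk.mp hab).exists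
    h

lemma uRel_of_forall {r : ∀ i, A i → A i → Prop} (h : ∀ i a b, r i a b) (x y : UProd D A) :
    uRel D r x y := by
  obtain ⟨f, rfl⟩ := mk_surjective x
  obtain ⟨g, rfl⟩ := mk_surjective y
  exact Eventually.of_forall fun i => h i (f i) (g i)

variable {B : ι → Type u} [∀ i, BooleanAlgebra (B i)]

theorem mk_le_baLength_of_forall_uRel {r : ∀ i, A i → A i → Prop} {ψ : ∀ i, A i → B i}
    (hψ : ∀ᶠ i in (D : Filter ι), ∀ a b, r i a b →
      (ψ i a = ψ i b → a = b) ∧ (ψ i a ≤ ψ i b ∨ ψ i b ≤ ψ i a))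
    {S : Set (UProd D A)} (hS : ∀ x ∈ S, ∀ y ∈ S, uRel D r x y) :
    #S ≤ baLength (UProd D B) := by
  have hpair : ∀ x ∈ S, ∀ y ∈ S,
      (map ψ x = map ψ y → x = y) ∧ (map ψ x ≤ map ψ y ∨ map ψ y ≤ map ψ x) := by
    intro x hx y hy
    have hxy := hS x hx y hy
    obtain ⟨f, rfl⟩ := mk_surjective x
    obtain ⟨g, rfl⟩ := mk_surjective y
    refine ⟨fun h => mk_eq_mk.mpr ?_, Ultrafilter.eventually_or.mp ?_⟩
    · filter_upwards [hψ, hxy, mk_eq_mk.mp h] with i hi hr he using (hi _ _ hr).1 he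
    · filter_upwards [hψ, hxy] with i hi hr using (hi _ _ hr).2
  calc #S = #(map ψ '' S) :=
        (mk_image_eq_of_injOn _ _ fun x hx y hy h => (hpair x hx y hy).1 h).symm
    _ ≤ _ := mk_le_baLength <| by
        rintro _ ⟨x, hx, rfl⟩ _ ⟨y, hy, rfl⟩ -
        exact (hpair x hx y hy).2

theorem mk_le_baLength_of_eventually_isChain (h : ∀ᶠ i in (D : Filter ι), ∃ X : Set (B i),
      IsChain (· ≤ ·) X ∧ #(A i) ≤ #X) :
    #(UProd D A) ≤ baLength (UProd D B) := by
  have : ∀ i, Nonempty (A i → B i) := fun _ => ⟨fun _ => ⊥⟩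
  obtain ⟨ψ, hψ⟩ := Filter.skolem.mp <|
    h.mono fun i ⟨_, hX, hle⟩ => exists_injective_total_of_mk_le hX hle
  rw [← mk_univ]
  exact mk_le_baLength_of_forall_uRel (r := fun _ _ _ => True)
    (hψ.mono fun i hi a b _ => ⟨fun h => hi.1 h, hi.2 a b⟩)
    fun x _ y _ => uRel_of_forall (fun _ _ _ => trivial) x y

theorem mk_preimage_map_le_baLength {J : ι → Type u} {φ : ∀ i, A i → J i} {ψ : ∀ i, A i → B i}
    (hψ : ∀ᶠ i in (D : Filter ι), ∀ a b, φ i a = φ i b →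
      (ψ i a = ψ i b → a = b) ∧ (ψ i a ≤ ψ i b ∨ ψ i b ≤ ψ i a))
    (t : UProd D J) : #(map φ ⁻¹' {t}) ≤ baLength (UProd D B) :=
  mk_le_baLength_of_forall_uRel hψ fun x hx y hy => by
    obtain ⟨f, rfl⟩ := mk_surjective x
    obtain ⟨g, rfl⟩ := mk_surjective y
    exact mk_eq_mk.mp (hx.trans hy.symm)

end UProd

theorem mk_uProd_baLength_out_le_of_singular {ι : Type u} {D : Ultrafilter ι}
    {B : ι → Type u} [∀ i, BooleanAlgebra (B i)]
    (h : ∀ᶠ i in (D : Filter ι), ℵ₀ < baLength (B i) ∧ (baLength (B i)).ord.cof < baLength (B i)) :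
    #(UProd D fun i => (baLength (B i)).out) ≤ baLength (UProd D B) := by
  set L := baLength (UProd D B)
  have : ∀ i, Nonempty (baLength (B i)).ord.cof.out := fun _ =>
    mk_ne_zero_iff.mp (by simpa using baLength_ne_zero)
  have : ∀ i, Nonempty ((baLength (B i)).out → B i) := fun _ => ⟨fun _ => ⊥⟩
  obtain ⟨φ, hφ⟩ := Filter.skolem.mp <| h.mono fun i hi => exists_cof_out_mk_preimage_lt hi.1.le
  obtain ⟨ψ, hψ⟩ := Filter.skolem.mp <|
    hφ.mono fun i hi => exists_fiberwise_injective_total (φ i) hi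
  have hcof : #(UProd D fun i => (baLength (B i)).ord.cof.out) ≤ L :=
    UProd.mk_le_baLength_of_eventually_isChain <| h.mono fun i hi =>
      let ⟨X, hX, hlt⟩ := exists_isChain_lt_mk hi.2
      ⟨X, hX, (mk_out _).trans_le hlt.le⟩
  have hL : ℵ₀ ≤ L := calc
    ℵ₀ = #(ULift.{u} ℕ) := by simp
    _ ≤ #(UProd D fun _ => ULift.{u} ℕ) := UProd.mk_le_mk_uProd_const _
    _ ≤ L := UProd.mk_le_baLength_of_eventually_isChain <| h.mono fun i hi =>
      let ⟨X, hX, hlt⟩ := exists_isChain_lt_mk hi.1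
      ⟨X, hX, by simpa using hlt.le⟩
  calc _ ≤ #(UProd D fun i => (baLength (B i)).ord.cof.out) * L :=
        mk_le_mk_mul_of_mk_preimage_le (UProd.map φ) (UProd.mk_preimage_map_le_baLength hψ)
    _ ≤ L * L := mul_le_mul_left hcof L
    _ = L := mul_eq_self hL

theorem statement_2_general {ι : Type u} (D : Ultrafilter ι)
    (B : ι → Type u) [∀ i, BooleanAlgebra (B i)]
    (h : baLength (UProd D B) < #(UProd D fun i => (baLength (B i)).out)) :
    {i | Order.IsSuccLimit (baLengthPlus (B i))} ∈ D ∧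
    {i | (baLengthPlus (B i)).IsRegular} ∈ D ∧
    {i | IsWeaklyInaccessible (baLengthPlus (B i))} ∈ D := by
  have hlimit : {i | IsSuccLimit (baLengthPlus (B i))} ∈ D := by
    by_contra hnot
    refine h.not_ge (UProd.mk_le_baLength_of_eventually_isChain ?_)
    filter_upwards [Ultrafilter.compl_mem_iff_notMem.mpr hnot] with i hi
    obtain ⟨X, hX, hXeq⟩ := exists_isChain_mk_eq_baLength hi
    exact ⟨X, hX, (mk_out _).trans_le hXeq.ge⟩
  have hregular : {i | (baLengthPlus (B i)).IsRegular} ∈ D := by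
    by_contra hnot
    refine h.not_ge (mk_uProd_baLength_out_le_of_singular ?_)
    filter_upwards [hlimit, Ultrafilter.compl_mem_iff_notMem.mpr hnot] with i hlim hsing
    rw [baLength_eq_baLengthPlus hlim]
    exact ⟨aleph0_lt_baLengthPlus hlim,
      lt_of_not_ge fun hcof => hsing ⟨aleph0_le_of_isSuccLimit hlim, hcof⟩⟩
  refine ⟨hlimit, hregular, ?_⟩
  filter_upwards [hlimit, hregular] with i hlim hreg
  exact ⟨aleph0_lt_baLengthPlus hlim, hreg, hlim⟩

/-- if `|∏ Length(B_i)/D| > Length(∏ B_i/D)` then `D`-almost all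
`Length⁺(B_i)` are limit cardinals, regular cardinals, and hence weakly inaccessible. -/
theorem statement_2 {ι : Type u} [Infinite ι] (D : Ultrafilter ι)
    (B : ι → Type u) [∀ i, BooleanAlgebra (B i)]
    (h : baLength (UProd D B) < #(UProd D fun i => (baLength (B i)).out)) :
    {i | Order.IsSuccLimit (baLengthPlus (B i))} ∈ D ∧
    {i | (baLengthPlus (B i)).IsRegular} ∈ D ∧
    {i | IsWeaklyInaccessible (baLengthPlus (B i))} ∈ D :=
  statement_2_general D B h

end ShSi641
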